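/- Let k ≥ 1 and n ≥ 0. Substituting t_j = (−1)^{j−1}·e_j(x₁,…,x_k) (where e_j is the j-th elementary symmetric polynomial in variables x₁,…,x_k) into the generalized Fibonacci polynomial F_{k,n}(t₁,…,t_k) yields the complete homogeneous symmetric polynomial h_n(x₁,…,x_k) of degree n. That is, the GFPs are the complete homogeneous symmetric polynomials written on the elementary symmetric polynomial basis. -/

import Mathlib

open Finset MvPolynomial

/-- The set of partitions `α ⊢ n` with parts at most `k`, encoded as tuples
`α = (α₁, …, α_k) ∈ ℕ^k` (0-indexed) with `∑ j, (j+1)·α_j = n`. -/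
def partitions (k n : ℕ) : Finset (Fin k → ℕ) :=
  (Fintype.piFinset fun _ : Fin k => Finset.range (n + 1)).filter
    fun α => ∑ j : Fin k, (j.1 + 1) * α j = n

/-- The generalized Fibonacci polynomial
`F_{k,n} = ∑_{α ⊢ n} (|α|!/(α₁!⋯α_k!))·t^α` in `ℤ[t₁,…,t_k]`, with `F_{k,0} = 1`. -/
noncomputable def F (k n : ℕ) : MvPolynomial (Fin k) ℤ :=
  ∑ α ∈ partitions k n,
    (Nat.multinomial Finset.univ α : MvPolynomial (Fin k) ℤ) * ∏ j, X j ^ α j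

/-! Both sides have the same generating function. By the multinomial theorem,
`∑ₙ F_{k,n} zⁿ = ∑ₘ (t₁z + ⋯ + t_k z^k)ᵐ`, so this series is the inverse of
`1 - t₁z - ⋯ - t_k z^k`. On the other side `∑ₙ hₙ zⁿ = ∏ᵢ (1 - xᵢz)⁻¹`, and
`∏ᵢ (1 - xᵢz) = ∑ⱼ (-1)ʲ eⱼ zʲ` is exactly `1 - t₁z - ⋯ - t_k z^k` at
`t_j = (-1)^{j-1} e_j`. -/

lemma PowerSeries.one_sub_C_mul_X_mul_mk_pow {A : Type*} [CommRing A] (r : A) :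
    (1 - C r * X) * mk (r ^ ·) = 1 := by
  simpa [rescale_mk, rescale_X, mul_comm] using
    congrArg (rescale r) (mk_one_mul_one_sub_eq_one (S := A))

namespace MvPolynomial

variable {σ R : Type*} [Fintype σ]

lemma hsymm_eq_sum_finsuppAntidiag [DecidableEq σ] [CommSemiring R] (n : ℕ) :
    hsymm σ R n = ∑ l ∈ finsuppAntidiag univ n, ∏ i, X i ^ l i := by
  rw [hsymm, ← sum_coe_sort (finsuppAntidiag univ n)]
  refine Fintype.sum_equiv ((Sym.equivNatSum σ n).trans (Equiv.subtypeEquivRight fun l => ?_))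
    _ _ fun s => ?_
  · simp [mem_finsuppAntidiag, Finsupp.sum_fintype]
  · simp only [Equiv.trans_apply, Equiv.subtypeEquivRight_apply_coe,
      Sym.coe_equivNatSum_apply_apply]
    rw [prod_multiset_map_count, prod_subset (subset_univ _) fun i _ hi => by
      rw [Multiset.count_eq_zero.2 (by simpa using hi), pow_zero]]
    rfl

lemma coeff_prod_mk_X_pow_eq_hsymm [DecidableEq σ] [CommSemiring R] (n : ℕ) :
    PowerSeries.coeff n (∏ i : σ, PowerSeries.mk fun m => (X i : MvPolynomial σ R) ^ m) =
      hsymm σ R n := by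
  simp [PowerSeries.coeff_prod, hsymm_eq_sum_finsuppAntidiag]

lemma prod_one_sub_C_X_mul_X_eq_sum_esymm [CommRing R] :
    ∏ i : σ, (1 - PowerSeries.C (X i : MvPolynomial σ R) * PowerSeries.X) =
      ∑ j ∈ range (Fintype.card σ + 1),
        PowerSeries.C ((-1) ^ j * esymm σ R j) * PowerSeries.X ^ j := by
  simp_rw [sub_eq_add_neg, prod_one_add]
  rw [← sum_fiberwise_of_maps_to (g := card) (t := range (Fintype.card σ + 1))
    fun t _ => mem_range_succ_iff.2 (card_le_univ t)]
  refine sum_congr rfl fun j _ => ?_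
  rw [esymm, mul_sum, map_sum, sum_mul, powersetCard_eq_filter]
  refine sum_congr rfl fun t ht => ?_
  rw [prod_neg, prod_mul_distrib, prod_const, (mem_filter.1 ht).2, map_mul, map_prod, map_pow,
    map_neg, map_one]
  ring

lemma prod_fin_one_sub_C_X_mul_X_eq_one_sub_sum [CommRing R] (k : ℕ) :
    ∏ i : Fin k, (1 - PowerSeries.C (X i : MvPolynomial (Fin k) R) * PowerSeries.X) =
      1 - ∑ j : Fin k, PowerSeries.C ((-1) ^ j.1 * esymm (Fin k) R (j.1 + 1)) *
        PowerSeries.X ^ (j.1 + 1) := by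
  rw [prod_one_sub_C_X_mul_X_eq_sum_esymm, Fintype.card_fin, sum_range_succ',
    Fin.sum_univ_eq_sum_range fun j =>
      PowerSeries.C ((-1) ^ j * esymm (Fin k) R (j + 1)) * PowerSeries.X ^ (j + 1)]
  simp [pow_succ]
  ring

end MvPolynomial

lemma mem_partitions {k n : ℕ} {α : Fin k → ℕ} :
    α ∈ partitions k n ↔ ∑ j : Fin k, (j.1 + 1) * α j = n := by
  refine ⟨fun h => (mem_filter.1 h).2, fun h => mem_filter.2 ⟨?_, h⟩⟩
  refine Fintype.mem_piFinset.2 fun i => mem_range_succ_iff.2 ?_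
  calc α i ≤ (i.1 + 1) * α i := Nat.le_mul_of_pos_left _ i.1.succ_pos
    _ ≤ n := h ▸ single_le_sum (f := fun j : Fin k => (j.1 + 1) * α j) (by simp) (mem_univ i)

/-- The series `t₁z + ⋯ + t_k z^k`, where `t_{j+1}` is the variable `X j`. -/
noncomputable def stepSeries (k : ℕ) : PowerSeries (MvPolynomial (Fin k) ℤ) :=
  ∑ j : Fin k, PowerSeries.C (X j) * PowerSeries.X ^ (j.1 + 1)

lemma coeff_stepSeries_pow (k m n : ℕ) :
    PowerSeries.coeff n (stepSeries k ^ m) =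
      ∑ α ∈ piAntidiag univ m with ∑ j : Fin k, (j.1 + 1) * α j = n,
        (Nat.multinomial univ α : MvPolynomial (Fin k) ℤ) * ∏ j, X j ^ α j := by
  rw [stepSeries, sum_pow_eq_sum_piAntidiag, map_sum, sum_filter]
  refine sum_congr rfl fun α _ => ?_
  have hterm : (Nat.multinomial univ α : PowerSeries (MvPolynomial (Fin k) ℤ)) *
      ∏ j, (PowerSeries.C (X j) * PowerSeries.X ^ (j.1 + 1)) ^ α j =
      PowerSeries.C ((Nat.multinomial univ α : MvPolynomial (Fin k) ℤ) * ∏ j, X j ^ α j) *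
        PowerSeries.X ^ ∑ j : Fin k, (j.1 + 1) * α j := by
    simp only [mul_pow, prod_mul_distrib, ← pow_mul, prod_pow_eq_pow_sum, map_mul, map_natCast,
      map_prod, map_pow]
    ring
  rw [hterm, PowerSeries.coeff_C_mul_X_pow]
  exact if_congr eq_comm rfl rfl

lemma coeff_sum_range_stepSeries_pow {k n N : ℕ} (hn : n < N) :
    PowerSeries.coeff n (∑ m ∈ range N, stepSeries k ^ m) = F k n := by
  simp_rw [map_sum, coeff_stepSeries_pow, F]
  rw [← sum_fiberwise_of_maps_to (g := fun α : Fin k → ℕ => ∑ j, α j) (t := range N)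
    fun α hα => ?_]
  · refine sum_congr rfl fun m _ => sum_congr ?_ fun _ _ => rfl
    ext α
    simp [mem_piAntidiag, mem_partitions, and_comm]
  · refine mem_range.2 (lt_of_le_of_lt ?_ hn)
    rw [← mem_partitions.1 hα]
    exact sum_le_sum fun j _ => Nat.le_mul_of_pos_left _ j.1.succ_pos

lemma X_dvd_stepSeries (k : ℕ) : PowerSeries.X ∣ stepSeries k :=
  dvd_sum fun j _ => (dvd_pow_self _ j.1.succ_ne_zero).mul_left _

lemma one_sub_stepSeries_mul_mk_F (k : ℕ) :
    (1 - stepSeries k) * PowerSeries.mk (F k) = 1 := by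
  ext n
  -- Up to degree `n`, `mk (F k)` agrees with `G = ∑_{m ≤ n} Sᵐ` (`S = stepSeries k`), and
  -- `(1 - S) G = 1 - Sⁿ⁺¹` with `zⁿ⁺¹ ∣ Sⁿ⁺¹`.
  set G := ∑ m ∈ range (n + 1), stepSeries k ^ m
  have hG : PowerSeries.X ^ (n + 1) ∣ PowerSeries.mk (F k) - G :=
    PowerSeries.X_pow_dvd_iff.2 fun d hd => by
      rw [map_sub, PowerSeries.coeff_mk, coeff_sum_range_stepSeries_pow hd, sub_self]
  have hpow : PowerSeries.X ^ (n + 1) ∣ stepSeries k ^ (n + 1) :=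
    pow_dvd_pow_of_dvd (X_dvd_stepSeries k) _
  have hsplit : (1 - stepSeries k) * PowerSeries.mk (F k) =
      1 - stepSeries k ^ (n + 1) + (1 - stepSeries k) * (PowerSeries.mk (F k) - G) := by
    rw [mul_sub, mul_neg_geom_sum]
    ring
  rw [hsplit, map_add, map_sub, PowerSeries.X_pow_dvd_iff.1 hpow n n.lt_succ_self,
    PowerSeries.X_pow_dvd_iff.1 (dvd_mul_of_dvd_right hG _) n n.lt_succ_self, sub_zero, add_zero]

lemma map_aeval_one_sub_stepSeries {k : ℕ} {A : Type*} [CommRing A] [Algebra ℤ A]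
    (t : Fin k → A) :
    PowerSeries.map (aeval t).toRingHom (1 - stepSeries k) =
      1 - ∑ j : Fin k, PowerSeries.C (t j) * PowerSeries.X ^ (j.1 + 1) := by
  simp [stepSeries]

theorem F_eq_complete_homogeneous_general (k n : ℕ) :
    aeval (fun j : Fin k => (-1 : MvPolynomial (Fin k) ℤ) ^ j.1 * esymm (Fin k) ℤ (j.1 + 1))
        (F k n) =
      hsymm (Fin k) ℤ n := by
  set t := fun j : Fin k => (-1 : MvPolynomial (Fin k) ℤ) ^ j.1 * esymm (Fin k) ℤ (j.1 + 1)
  set P := ∏ i : Fin k, (1 - PowerSeries.C (X i : MvPolynomial (Fin k) ℤ) * PowerSeries.X)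
    with hP
  have hF : P * PowerSeries.map (aeval t).toRingHom (PowerSeries.mk (F k)) = 1 := by
    have := congrArg (PowerSeries.map (aeval t).toRingHom) (one_sub_stepSeries_mul_mk_F k)
    rwa [map_mul, map_one, map_aeval_one_sub_stepSeries,
      ← prod_fin_one_sub_C_X_mul_X_eq_one_sub_sum] at this
  have hH :
      P * ∏ i : Fin k, PowerSeries.mk (fun m => (X i : MvPolynomial (Fin k) ℤ) ^ m) = 1 := by
    rw [hP, ← prod_mul_distrib]
    exact prod_eq_one fun i _ => PowerSeries.one_sub_C_mul_X_mul_mk_pow _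
  have hFH := left_inv_eq_right_inv (by rw [mul_comm, hF]) hH
  simpa [coeff_prod_mk_X_pow_eq_hsymm] using congrArg (PowerSeries.coeff n) hFH

theorem F_eq_complete_homogeneous (k n : ℕ) (hk : 1 ≤ k) :
    aeval (fun j : Fin k => (-1 : MvPolynomial (Fin k) ℤ) ^ j.1 * esymm (Fin k) ℤ (j.1 + 1))
        (F k n) =
      hsymm (Fin k) ℤ n :=
  F_eq_complete_homogeneous_general k n
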